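/- Let μ_1, ..., μ_k be nonzero integers, r_1, ..., r_k positive integers, and suppose there exist indices i, j with μ_i > 0 and μ_j < 0. Then the residue of the rational function f(z) = Π_{i=1}^k (1 - z^{-μ_i})^{-r_i} is zero: the expansion of f in powers of z has lowest-degree term of positive degree, and the expansion in powers of z^{-1} has lowest-degree term of positive degree in z^{-1}, so both constant coefficients vanish. -/

import Mathlib

/-!
Expanding at `0`, the factor `1 - z ^ μ` has order `min μ 0`, so the product
`∏ (1 - z ^ μ i) ^ r i` has order `∑ r i • min (μ i) 0`, which is negative as soon as one weight
is negative. Its inverse then has positive order, and so has zero constant coefficient. The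
expansion at infinity is the same computation with the weights negated, and there it is a
positive weight that is needed.
-/

open HahnSeries
open scoped RatFunc

theorem AddValuation.map_prod {R Γ₀ ι : Type*} [CommRing R] [LinearOrderedAddCommMonoidWithTop Γ₀]
    (v : AddValuation R Γ₀) (s : Finset ι) (f : ι → R) :
    v (∏ i ∈ s, f i) = ∑ i ∈ s, v (f i) := by
  classical
  induction s using Finset.induction with
  | empty => simp
  | insert a s ha ih => rw [Finset.prod_insert ha, Finset.sum_insert ha, v.map_mul, ih]

theorem HahnSeries.orderTop_one_sub_single {Γ R : Type*} [Zero Γ] [LinearOrder Γ] [Ring R]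
    [Nontrivial R] {g : Γ} (hg : g ≠ 0) :
    (1 - single g (1 : R)).orderTop = ↑(min g 0) := by
  rcases hg.lt_or_gt with hneg | hpos
  · rw [← orderTop_neg, neg_sub, orderTop_sub] <;>
      simp [orderTop_single, orderTop_one, hneg, hneg.le]
  · rw [orderTop_sub] <;> simp [orderTop_single, orderTop_one, hpos, hpos.le]

theorem RatFunc.coe_X_zpow {K : Type*} [Field K] (n : ℤ) :
    ((RatFunc.X ^ n : RatFunc K) : LaurentSeries K) = single n 1 := by
  rw [map_zpow₀, RatFunc.coe_X, ← RatFunc.single_zpow]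

theorem sum_nsmul_min_zero_neg {ι : Type*} [Fintype ι] (μ : ι → ℤ) (r : ι → ℕ)
    (hneg : ∃ j, μ j < 0 ∧ 0 < r j) : ∑ i, r i • min (μ i) 0 < 0 := by
  obtain ⟨j, hμj, hrj⟩ := hneg
  calc ∑ i, r i • min (μ i) 0 < ∑ _i : ι, (0 : ℤ) := by
        refine Finset.sum_lt_sum (fun i _ => Left.nsmul_nonpos (min_le_right _ _) _)
          ⟨j, Finset.mem_univ j, ?_⟩
        rw [min_eq_left hμj.le]
        exact Right.nsmul_neg hrj hμj
    _ = 0 := Finset.sum_const_zero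

theorem addVal_prod_one_sub_X_zpow_pow {K ι : Type*} [Field K] [Fintype ι] (μ : ι → ℤ)
    (r : ι → ℕ) (hμ : ∀ i, μ i ≠ 0) :
    addVal ℤ K ((∏ i, (1 - RatFunc.X ^ (μ i)) ^ (r i) : RatFunc K) : LaurentSeries K) =
      ↑(∑ i, r i • min (μ i) 0) := by
  simp only [map_prod, map_pow, map_sub, map_one, RatFunc.coe_X_zpow, AddValuation.map_prod,
    AddValuation.map_pow, addVal_apply, orderTop_one_sub_single (hμ _), WithTop.coe_sum,
    WithTop.coe_nsmul]

theorem coeff_zero_inv_prod_one_sub_X_zpow_pow {K ι : Type*} [Field K] [Fintype ι]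
    (μ : ι → ℤ) (r : ι → ℕ) (hμ : ∀ i, μ i ≠ 0) (hneg : ∃ j, μ j < 0 ∧ 0 < r j) :
    (((∏ i, (1 - RatFunc.X ^ (μ i)) ^ (r i) : RatFunc K)⁻¹ : LaurentSeries K)).coeff 0 = 0 := by
  refine coeff_eq_zero_of_lt_orderTop ?_
  rw [← addVal_apply, AddValuation.map_inv, addVal_prod_one_sub_X_zpow_pow μ r hμ]
  exact_mod_cast neg_pos.mpr (sum_nsmul_min_zero_neg μ r hneg)

/-- Let `μ₁, …, μₖ` be nonzero integers, `r₁, …, rₖ` positive integers, with at least one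
positive and at least one negative weight.  Then the residue of
`f(z) = ∏ i (1 - z^{-μ i})^{-r i}` vanishes: the constant coefficient of the Laurent
expansion of `f` at `0` is zero, the constant coefficient of the expansion at infinity
(i.e. of `f(1/z) = ∏ i (1 - z^{μ i})^{-r i}` at `0`) is zero, and hence the residue
(their difference) is zero. -/
theorem residue_mixed_weights_eq_zero (k : ℕ) (μ : Fin k → ℤ) (r : Fin k → ℕ)
    (hμ : ∀ i, μ i ≠ 0) (hr : ∀ i, 0 < r i)
    (hpos : ∃ i, 0 < μ i) (hneg : ∃ j, μ j < 0) :
    (((∏ i, (1 - RatFunc.X ^ (μ i)) ^ (r i) : RatFunc ℚ)⁻¹ : LaurentSeries ℚ)).coeff 0 = 0 ∧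
    (((∏ i, (1 - RatFunc.X ^ (-μ i)) ^ (r i) : RatFunc ℚ)⁻¹ : LaurentSeries ℚ)).coeff 0 = 0 ∧
    (((∏ i, (1 - RatFunc.X ^ (μ i)) ^ (r i) : RatFunc ℚ)⁻¹ : LaurentSeries ℚ)).coeff 0 -
      (((∏ i, (1 - RatFunc.X ^ (-μ i)) ^ (r i) : RatFunc ℚ)⁻¹ : LaurentSeries ℚ)).coeff 0
        = 0 := by
  have at_zero := coeff_zero_inv_prod_one_sub_X_zpow_pow (K := ℚ) μ r hμ
    (hneg.imp fun j hj => ⟨hj, hr j⟩)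
  have at_infinity := coeff_zero_inv_prod_one_sub_X_zpow_pow (K := ℚ) (fun i => -μ i) r
    (fun i => neg_ne_zero.mpr (hμ i)) (hpos.imp fun i hi => ⟨neg_neg_iff_pos.mpr hi, hr i⟩)
  exact ⟨at_zero, at_infinity, by rw [at_zero, at_infinity, sub_zero]⟩
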